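/- Let 𝔧 be a strongly stable ideal in R, m a positive integer, and 𝔊 a [𝔧,m]-marked set with completion 𝔊̄. Then the set G = {x_0^{m_α} f_α^h : f_α ∈ 𝔊 ∪ 𝔊̄}, where m_α = max{0, m − deg f_α} and f^h denotes homogenization, is a (𝔧^h)_{≥m}-marked set in S, with head terms Ht(x_0^{m_α} f_α^h) = x_0^{m_α + deg(f_α) − |α|} x^α. -/

import Mathlib

open MvPolynomial

namespace Paper

/-- Monomials (exponent vectors) in `N` variables. -/
abbrev Mon (N : ℕ) := Fin N →₀ ℕ

variable {N : ℕ}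

/-- Total degree of a monomial. -/
def mdeg (u : Mon N) : ℕ := u.sum fun _ e => e

/-- `BorelStep a b` : `b` is obtained from `a` by one increasing elementary move,
i.e. `x^a · x_j = x^b · x_i` with `i < j`. -/
def BorelStep (a b : Mon N) : Prop :=
  ∃ i j : Fin N, i < j ∧ a + Finsupp.single j 1 = b + Finsupp.single i 1

/-- `BorelLt a b` : `a <_B b`, i.e. `b` is obtained from `a` by a nonempty
sequence of increasing elementary moves. -/
def BorelLt (a b : Mon N) : Prop := Relation.TransGen BorelStep a b

/-- A (combinatorially encoded) monomial ideal: a set of monomials closed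
under multiplication by monomials. -/
def MonIdeal (J : Set (Mon N)) : Prop := ∀ u ∈ J, ∀ d : Mon N, u + d ∈ J

/-- A strongly stable monomial ideal. -/
def StronglyStable (J : Set (Mon N)) : Prop :=
  MonIdeal J ∧ ∀ b ∈ J, ∀ a, BorelLt b a → a ∈ J

/-- The minimal monomial basis `B_J` of a monomial ideal. -/
def MinBasis (J : Set (Mon N)) : Set (Mon N) :=
  {u | u ∈ J ∧ ∀ v ∈ J, v ≤ u → v = u}

/-- `min(x^a) ≥ max(x^h)`. -/
def StarCond (a h : Mon N) : Prop :=
  ∀ i j : Fin N, a i ≠ 0 → h j ≠ 0 → j ≤ i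


variable (K : Type) [Field K]

/-- The monomial `x^u` as a polynomial. -/
noncomputable def mono {N : ℕ} (u : Mon N) : MvPolynomial (Fin N) K :=
  MvPolynomial.monomial u (1 : K)

/-- The (actual) monomial ideal of `S` spanned by a set of monomials. -/
noncomputable def idealOf {N : ℕ} (J : Set (Mon N)) : Ideal (MvPolynomial (Fin N) K) :=
  Ideal.span (mono K '' J)

/-- The irrelevant maximal ideal `(x_0, …, x_n)`. -/
noncomputable def irrel (N : ℕ) : Ideal (MvPolynomial (Fin N) K) :=
  Ideal.span (Set.range MvPolynomial.X)

/-- The saturation `I^sat = ⋃_j (I : (x_0,…,x_n)^j)`. -/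
noncomputable def satIdeal {N : ℕ} (I : Ideal (MvPolynomial (Fin N) K)) :
    Ideal (MvPolynomial (Fin N) K) :=
  ⨆ k : ℕ, Submodule.colon I ((irrel K N ^ k : Ideal (MvPolynomial (Fin N) K)) : Set (MvPolynomial (Fin N) K))

/-- The satiety of a homogeneous ideal: the smallest `m` such that
`I_t = (I^sat)_t` for all `t ≥ m`. -/
noncomputable def satiety {N : ℕ} (I : Ideal (MvPolynomial (Fin N) K)) : ℕ :=
  sInf {m | ∀ t, m ≤ t → ∀ p : MvPolynomial (Fin N) K,
    p.IsHomogeneous t → (p ∈ I ↔ p ∈ satIdeal K I)}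

/-- The saturation of a combinatorial monomial ideal. -/
def msat {N : ℕ} (J : Set (Mon N)) : Set (Mon N) :=
  {u | ∃ k : ℕ, ∀ d : Mon N, mdeg d = k → u + d ∈ J}

/-- The satiety of a combinatorial monomial ideal. -/
noncomputable def msatiety {N : ℕ} (J : Set (Mon N)) : ℕ :=
  sInf {m | ∀ u : Mon N, m ≤ mdeg u → (u ∈ J ↔ u ∈ msat J)}

/-- A non-homogeneous `𝔧`-marked set: marked polynomials `f_α` with pairwise
distinct head terms forming `B_𝔧` and tails supported outside `𝔧`. -/
def NHMarkedSet {N : ℕ} (𝔧 : Set (Mon N)) (f : Mon N → MvPolynomial (Fin N) K) : Prop :=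
  ∀ α ∈ MinBasis 𝔧,
    MvPolynomial.coeff α (f α) = 1 ∧
    ∀ u ∈ (f α).support, u ≠ α → u ∉ 𝔧

/-- One step of the `𝔊_∗`-reduction: the monomial `x^γ = x^α ∗_𝔧 x^η` of the
support of `g` is replaced by `x^η · T(f_α)`. -/
def RStep {N : ℕ} (𝔧 : Set (Mon N)) (f : Mon N → MvPolynomial (Fin N) K)
    (g g₁ : MvPolynomial (Fin N) K) : Prop :=
  ∃ γ α η : Mon N, γ ∈ g.support ∧ γ ∈ 𝔧 ∧ α ∈ MinBasis 𝔧 ∧ γ = α + η ∧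
    StarCond α η ∧
    g₁ = g - MvPolynomial.coeff γ g • (mono K η * f α)

/-- The `𝔊_∗`-reduction relation (reflexive-transitive closure of `RStep`). -/
def Reduces {N : ℕ} (𝔧 : Set (Mon N)) (f : Mon N → MvPolynomial (Fin N) K) :
    MvPolynomial (Fin N) K → MvPolynomial (Fin N) K → Prop :=
  Relation.ReflTransGen (RStep K 𝔧 f)

/-- `g` is reduced: `supp(g) ∩ 𝔧 = ∅`. -/
def IsReducedPoly {N : ℕ} (𝔧 : Set (Mon N)) (g : MvPolynomial (Fin N) K) : Prop :=
  ∀ u ∈ g.support, u ∉ 𝔧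

/-- A `[𝔧,m]`-marked set: a n.h. `𝔧`-marked set whose tails are supported in
`N(𝔧)_{≤ max{m,|α|}}`. -/
def JmMarkedSet {N : ℕ} (𝔧 : Set (Mon N)) (m : ℕ)
    (f : Mon N → MvPolynomial (Fin N) K) : Prop :=
  ∀ α ∈ MinBasis 𝔧,
    MvPolynomial.coeff α (f α) = 1 ∧
    ∀ u ∈ (f α).support, u ≠ α → (u ∉ 𝔧 ∧ mdeg u ≤ max m (mdeg α))

/-- The ideal `(𝔊)` generated by a marked set. -/
noncomputable def idealG {N : ℕ} (𝔧 : Set (Mon N))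
    (f : Mon N → MvPolynomial (Fin N) K) : Ideal (MvPolynomial (Fin N) K) :=
  Ideal.span (f '' MinBasis 𝔧)

/-- A `[𝔧,m]`-completion of `𝔊`: marked polynomials `f_β ∈ (𝔊)` with pairwise
distinct head terms the monomials of `𝔧_{≤m} \ B_𝔧` and tails in `N(𝔧)_{≤m}`. -/
def IsCompletion {N : ℕ} (𝔧 : Set (Mon N)) (m : ℕ)
    (f h : Mon N → MvPolynomial (Fin N) K) : Prop :=
  ∀ β : Mon N, β ∈ 𝔧 → mdeg β ≤ m → β ∉ MinBasis 𝔧 →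
    h β ∈ idealG K 𝔧 f ∧
    MvPolynomial.coeff β (h β) = 1 ∧
    ∀ u ∈ (h β).support, u ≠ β → (u ∉ 𝔧 ∧ mdeg u ≤ m)

/-- `g'` is a `[𝔧,m]`-reduced form of `g` modulo `(𝔊)`. -/
def IsReducedForm {N : ℕ} (𝔧 : Set (Mon N)) (m : ℕ)
    (f : Mon N → MvPolynomial (Fin N) K)
    (g g' : MvPolynomial (Fin N) K) : Prop :=
  (∀ u ∈ g'.support, u ∉ 𝔧 ∧ mdeg u ≤ max m g.totalDegree) ∧
  g - g' ∈ idealG K 𝔧 f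

/-- `R_{≤ t}`: the `K`-subspace of polynomials of degree at most `t`. -/
noncomputable def degLE (N : ℕ) (t : ℕ) : Submodule K (MvPolynomial (Fin N) K) where
  carrier := {g | ∀ u ∈ g.support, mdeg u ≤ t}
  zero_mem' := by simp
  add_mem' := by
    intro a b ha hb u hu
    rcases Finset.mem_union.mp (MvPolynomial.support_add hu) with h | h
    · exact ha u h
    · exact hb u h
  smul_mem' := by
    intro c a ha u hu
    exact ha u (MvPolynomial.support_smul hu)

/-- `⟨N(𝔧)_{≤t}⟩`: the `K`-span of the monomials outside `𝔧` of degree `≤ t`. -/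
noncomputable def spanNLE {N : ℕ} (𝔧 : Set (Mon N)) (t : ℕ) :
    Submodule K (MvPolynomial (Fin N) K) :=
  Submodule.span K (mono K '' {u : Mon N | u ∉ 𝔧 ∧ mdeg u ≤ t})

/-- `(𝔊)_{≤t}`: the `K`-subspace of elements of `(𝔊)` of degree `≤ t`. -/
noncomputable def GleSub {N : ℕ} (𝔧 : Set (Mon N))
    (f : Mon N → MvPolynomial (Fin N) K) (t : ℕ) :
    Submodule K (MvPolynomial (Fin N) K) :=
  (idealG K 𝔧 f).restrictScalars K ⊓ degLE K N t

/-- A `[𝔧,m]`-marked basis: a `[𝔧,m]`-marked set with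
`R_{≤t} = ⟨N(𝔧)_{≤t}⟩ ⊕ (𝔊)_{≤t}` for all `t ≥ m`. -/
def JmMarkedBasis {N : ℕ} (𝔧 : Set (Mon N)) (m : ℕ)
    (f : Mon N → MvPolynomial (Fin N) K) : Prop :=
  JmMarkedSet K 𝔧 m f ∧
  ∀ t, m ≤ t →
    Disjoint (spanNLE K 𝔧 t) (GleSub K 𝔧 f t) ∧
    spanNLE K 𝔧 t ⊔ GleSub K 𝔧 f t = degLE K N t

variable {n : ℕ}

/-- Embedding of monomials of `R = K[x_1,…,x_n]` into
`S = K[x_0,x_1,…,x_n]` (index `0` is the extra smallest variable `x_0`). -/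
noncomputable def emb : Mon n → Mon (n + 1) := Finsupp.mapDomain Fin.succ

/-- Dehomogenization of monomials: set `x_0 = 1`, i.e. forget the exponent
of `x_0`. -/
noncomputable def dehomM (v : Mon (n + 1)) : Mon n :=
  Finsupp.comapDomain Fin.succ v (Fin.succ_injective n).injOn

/-- The monomial ideal generated by a set `B` of monomials. -/
def genBy {N : ℕ} (B : Set (Mon N)) : Set (Mon N) :=
  {v | ∃ b ∈ B, b ≤ v}

/-- The homogenization `f^h ∈ S` of a polynomial `f ∈ R`. -/
noncomputable def homogPoly (f : MvPolynomial (Fin n) K) :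
    MvPolynomial (Fin (n + 1)) K :=
  ∑ u ∈ f.support,
    MvPolynomial.monomial (emb u + Finsupp.single 0 (f.totalDegree - mdeg u))
      (MvPolynomial.coeff u f)

/-- The dehomogenization `F^a ∈ R` of a polynomial `F ∈ S` (set `x_0 = 1`). -/
noncomputable def dehomPoly : MvPolynomial (Fin (n + 1)) K →ₐ[K] MvPolynomial (Fin n) K :=
  MvPolynomial.aeval
    (Fin.cases (motive := fun _ => MvPolynomial (Fin n) K) 1 MvPolynomial.X)

/-- Common index set `B_𝔧 ∪ (𝔧_{≤m} \ B_𝔧)` for a marked set together with a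
completion. -/
def Dset {N : ℕ} (𝔧 : Set (Mon N)) (m : ℕ) : Set (Mon N) :=
  MinBasis 𝔧 ∪ {β | β ∈ 𝔧 ∧ mdeg β ≤ m ∧ β ∉ MinBasis 𝔧}

open Classical in
/-- The marked polynomial of `𝔊 ∪ 𝔊̄` with head term `x^α`. -/
noncomputable def combPoly {N : ℕ} (𝔧 : Set (Mon N))
    (f h : Mon N → MvPolynomial (Fin N) K) (α : Mon N) : MvPolynomial (Fin N) K :=
  if α ∈ MinBasis 𝔧 then f α else h α

/-- `m_α = max{0, m - deg f_α}`. -/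
noncomputable def mShift {N : ℕ} (𝔧 : Set (Mon N))
    (f h : Mon N → MvPolynomial (Fin N) K) (m : ℕ) (α : Mon N) : ℕ :=
  m - (combPoly K 𝔧 f h α).totalDegree

/-- The head term `x_0^{m_α + deg f_α - |α|} x^α` of the homogenized marked
polynomial. -/
noncomputable def homHead (𝔧 : Set (Mon n))
    (f h : Mon n → MvPolynomial (Fin n) K) (m : ℕ) (α : Mon n) : Mon (n + 1) :=
  emb α + Finsupp.single 0
    (mShift K 𝔧 f h m α + (combPoly K 𝔧 f h α).totalDegree - mdeg α)

/-- The homogenized marked polynomial `x_0^{m_α} f_α^h`. -/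
noncomputable def homG (𝔧 : Set (Mon n))
    (f h : Mon n → MvPolynomial (Fin n) K) (m : ℕ) (α : Mon n) :
    MvPolynomial (Fin (n + 1)) K :=
  MvPolynomial.X 0 ^ (mShift K 𝔧 f h m α) * homogPoly K (combPoly K 𝔧 f h α)

/-- The truncation `J_{≥ m}` of a monomial ideal. -/
def trunc {N : ℕ} (J : Set (Mon N)) (m : ℕ) : Set (Mon N) :=
  {u | u ∈ J ∧ m ≤ mdeg u}

/-!
Each `f_α ∈ 𝔊 ∪ 𝔊̄` has head `x^α`, tails outside `𝔧`, and `|α| ≤ deg f_α ≤ max m |α|`.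
Hence `x_0^{m_α} f_α^h` is homogeneous of degree `max m |α|` with head `x_0^{m - |α|} x^α`,
and its other terms dehomogenize to tails of `f_α`; since membership in `𝔧^h` is decided after
setting `x_0 = 1`, they lie outside `𝔧^h`. The minimal generators of `(𝔧^h)_{≥m}` are the
monomials of `𝔧^h` of degree `m`, i.e. the `x_0^{m - |α|} x^α` with `α ∈ 𝔧_{≤m}`, together
with the minimal generators `x^α`, `α ∈ B_𝔧`, of degree `> m`: these are exactly the heads.
-/

section MonomialIdeals

variable {J : Set (Mon N)}

lemma mdeg_eq_degree (u : Mon N) : mdeg u = u.degree := rfl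

lemma mdeg_add (a b : Mon N) : mdeg (a + b) = mdeg a + mdeg b := map_add Finsupp.degree a b

lemma mdeg_tsub_of_le {a b : Mon N} (hle : a ≤ b) : mdeg (b - a) = mdeg b - mdeg a := by
  have := congrArg mdeg (add_tsub_cancel_of_le hle)
  rw [mdeg_add] at this
  omega

lemma eq_of_le_of_mdeg_eq {a b : Mon N} (hle : a ≤ b) (hdeg : mdeg a = mdeg b) : a = b := by
  have hsub : mdeg (b - a) = 0 := by rw [mdeg_tsub_of_le hle, hdeg, Nat.sub_self]
  rw [mdeg_eq_degree, Finsupp.degree_eq_zero_iff, tsub_eq_zero_iff_le] at hsub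
  exact le_antisymm hle hsub

lemma MonIdeal.mem_of_le (hJ : MonIdeal J) {a b : Mon N} (ha : a ∈ J) (hab : a ≤ b) : b ∈ J :=
  add_tsub_cancel_of_le hab ▸ hJ a ha (b - a)

lemma exists_mem_minBasis_le {u : Mon N} (hu : u ∈ J) : ∃ b ∈ MinBasis J, b ≤ u := by
  obtain ⟨b, ⟨hbJ, hbu⟩, hmin⟩ :=
    wellFounded_lt.has_min {v | v ∈ J ∧ v ≤ u} ⟨u, hu, le_rfl⟩
  exact ⟨b, ⟨hbJ, fun v hvJ hvb =>
    hvb.eq_or_lt.resolve_right (hmin v ⟨hvJ, hvb.trans hbu⟩)⟩, hbu⟩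

lemma genBy_monIdeal (B : Set (Mon N)) : MonIdeal (genBy B) :=
  fun _ ⟨b, hb, hbu⟩ _ => ⟨b, hb, hbu.trans le_self_add⟩

lemma minBasis_genBy_subset (B : Set (Mon N)) : MinBasis (genBy B) ⊆ B := by
  rintro u ⟨⟨b, hb, hbu⟩, hmin⟩
  exact hmin b ⟨b, hb, le_rfl⟩ hbu ▸ hb

lemma mem_minBasis_trunc_iff (hJ : MonIdeal J) {m : ℕ} {u : Mon N} :
    u ∈ MinBasis (trunc J m) ↔ (u ∈ J ∧ mdeg u = m) ∨ (u ∈ MinBasis J ∧ m < mdeg u) := by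
  constructor
  · rintro ⟨⟨huJ, hmu⟩, hmin⟩
    refine (eq_or_lt_of_le hmu).imp (fun h => ⟨huJ, h.symm⟩) fun hlt =>
      ⟨⟨huJ, fun v hvJ hvu => ?_⟩, hlt⟩
    -- enlarge `v` inside `u` to degree `max m |v|`; minimality of `u` forces `|u| = |v|`
    obtain ⟨g, hg, hdeg⟩ := Finsupp.exists_le_degree_eq (u - v) (m - mdeg v) (by
      rw [← mdeg_eq_degree, mdeg_tsub_of_le hvu]; omega)
    have hvgu : v + g ≤ u := (add_le_add_right hg v).trans_eq (add_tsub_cancel_of_le hvu)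
    have hvg : mdeg (v + g) = max m (mdeg v) := by
      rw [mdeg_add, mdeg_eq_degree g, hdeg]; omega
    have hdegu : mdeg u = max m (mdeg v) :=
      hmin _ ⟨hJ.mem_of_le hvJ le_self_add, hvg ▸ le_max_left _ _⟩ hvgu ▸ hvg
    exact eq_of_le_of_mdeg_eq hvu (by omega)
  · rintro (⟨huJ, hdeg⟩ | ⟨hu, hlt⟩)
    · exact ⟨⟨huJ, hdeg.ge⟩, fun v hv hvu =>
        eq_of_le_of_mdeg_eq hvu (le_antisymm (Finsupp.degree_mono hvu) (hdeg ▸ hv.2))⟩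
    · exact ⟨⟨hu.1, hlt.le⟩, fun v hv hvu => hu.2 v hv.1 hvu⟩

end MonomialIdeals

section Homogenization

open Finsupp (cons tail)

lemma mdeg_cons (c : ℕ) (u : Mon n) : mdeg (cons c u) = c + mdeg u := Finsupp.sum_cons n u c

lemma cons_le_cons_iff {a b : ℕ} {s t : Mon n} : cons a s ≤ cons b t ↔ a ≤ b ∧ s ≤ t := by
  simp only [Finsupp.le_def, Fin.forall_fin_succ, Finsupp.cons_zero, Finsupp.cons_succ]

lemma emb_eq_cons (u : Mon n) : emb u = cons 0 u := by
  ext j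
  cases j using Fin.cases with
  | zero => exact Finsupp.mapDomain_of_notMem_range u 0 (by simp)
  | succ i => exact Finsupp.mapDomain_apply (Fin.succ_injective n) u i

lemma emb_add_single_zero (u : Mon n) (c : ℕ) : emb u + Finsupp.single 0 c = cons c u := by
  ext j
  cases j using Fin.cases <;> simp [emb_eq_cons, Fin.succ_ne_zero]

lemma emb_le_iff_le_tail {b : Mon n} {v : Mon (n + 1)} : emb b ≤ v ↔ b ≤ tail v := by
  rw [emb_eq_cons, ← Finsupp.cons_tail v, cons_le_cons_iff, Finsupp.tail_cons]
  exact and_iff_right (Nat.zero_le _)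

variable {J : Set (Mon n)}

lemma mem_genBy_emb_minBasis_iff (hJ : MonIdeal J) {v : Mon (n + 1)} :
    v ∈ genBy (emb '' MinBasis J) ↔ tail v ∈ J := by
  constructor
  · rintro ⟨_, ⟨b, hb, rfl⟩, hbv⟩
    exact hJ.mem_of_le hb.1 (emb_le_iff_le_tail.mp hbv)
  · intro hv
    obtain ⟨b, hb, hbv⟩ := exists_mem_minBasis_le hv
    exact ⟨emb b, ⟨b, hb, rfl⟩, emb_le_iff_le_tail.mpr hbv⟩

lemma emb_mem_minBasis_genBy (hJ : MonIdeal J) {b : Mon n} (hb : b ∈ MinBasis J) :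
    emb b ∈ MinBasis (genBy (emb '' MinBasis J)) := by
  refine ⟨⟨emb b, ⟨b, hb, rfl⟩, le_rfl⟩, fun v hv hvb => ?_⟩
  rw [mem_genBy_emb_minBasis_iff hJ] at hv
  rw [emb_eq_cons, ← Finsupp.cons_tail v, cons_le_cons_iff] at hvb
  rw [emb_eq_cons, ← Finsupp.cons_tail v]
  rw [Nat.le_zero.mp hvb.1, hb.2 _ hv hvb.2]

/-- `x_0^{m - |α|} x^α`; the subtraction truncates, so its degree is `max m |α|`. -/
noncomputable def padMon (m : ℕ) (α : Mon n) : Mon (n + 1) := cons (m - mdeg α) α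

lemma mdeg_padMon (m : ℕ) (α : Mon n) : mdeg (padMon m α) = max m (mdeg α) := by
  rw [padMon, mdeg_cons]; omega

lemma padMon_injective (m : ℕ) : Function.Injective (padMon (n := n) m) := fun α β h => by
  simpa only [padMon, Finsupp.tail_cons] using congrArg tail h

lemma mem_Dset_iff {m : ℕ} {α : Mon n} :
    α ∈ Dset J m ↔ α ∈ MinBasis J ∨ (α ∈ J ∧ mdeg α ≤ m) := by
  by_cases hα : α ∈ MinBasis J <;> simp +contextual [Dset, hα]

lemma image_padMon_Dset (hJ : MonIdeal J) (m : ℕ) :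
    padMon m '' Dset J m = MinBasis (trunc (genBy (emb '' MinBasis J)) m) := by
  ext w
  rw [mem_minBasis_trunc_iff (genBy_monIdeal _), mem_genBy_emb_minBasis_iff hJ]
  constructor
  · rintro ⟨α, hα, rfl⟩
    rcases le_or_gt (mdeg α) m with hle | hlt
    · refine Or.inl ⟨?_, by rw [mdeg_padMon]; omega⟩
      rw [padMon, Finsupp.tail_cons]
      exact (mem_Dset_iff.mp hα).elim (fun hb => hb.1) And.left
    · have hb : α ∈ MinBasis J := (mem_Dset_iff.mp hα).resolve_right (by omega)
      have hpad : padMon m α = emb α := by rw [padMon, emb_eq_cons, Nat.sub_eq_zero_of_le hlt.le]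
      exact Or.inr ⟨hpad ▸ emb_mem_minBasis_genBy hJ hb, by rw [mdeg_padMon]; omega⟩
  · rintro (⟨hwJ, hdeg⟩ | ⟨hw, hlt⟩)
    · have hsplit := mdeg_cons (w 0) (tail w)
      rw [Finsupp.cons_tail, hdeg] at hsplit
      refine ⟨tail w, mem_Dset_iff.mpr (?_), ?_⟩
      · by_cases hb : tail w ∈ MinBasis J
        exacts [Or.inl hb, Or.inr ⟨hwJ, by omega⟩]
      · rw [padMon, hsplit, Nat.add_sub_cancel, Finsupp.cons_tail]
    · obtain ⟨b, hb, rfl⟩ := minBasis_genBy_subset _ hw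
      rw [mdeg_eq_degree, emb_eq_cons, ← mdeg_eq_degree, mdeg_cons] at hlt
      exact ⟨b, Or.inl hb, by rw [padMon, emb_eq_cons, Nat.sub_eq_zero_of_le (by omega)]⟩

end Homogenization

section Polynomials

open Finsupp (cons tail)

lemma coeff_sum_monomial_of_injective {σ τ R : Type*} [CommSemiring R]
    {e : (σ →₀ ℕ) → (τ →₀ ℕ)} (he : e.Injective) (p : MvPolynomial σ R) (u : σ →₀ ℕ) :
    coeff (e u) (∑ v ∈ p.support, monomial (e v) (coeff v p)) = coeff u p := by
  classical
  rw [coeff_sum, Finset.sum_eq_single u (fun v _ hvu => by rw [coeff_monomial, if_neg (he.ne hvu)])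
    (fun hu => by rw [notMem_support_iff.mp hu, monomial_zero, coeff_zero]), coeff_monomial,
    if_pos rfl]

lemma exists_eq_of_mem_support_sum_monomial {σ τ R : Type*} [CommSemiring R]
    (e : (σ →₀ ℕ) → (τ →₀ ℕ)) (p : MvPolynomial σ R) {w : τ →₀ ℕ}
    (hw : w ∈ (∑ v ∈ p.support, monomial (e v) (coeff v p)).support) :
    ∃ u ∈ p.support, w = e u := by
  classical
  obtain ⟨u, hu, hwu⟩ := Finset.mem_biUnion.mp (support_sum hw)
  exact ⟨u, hu, Finset.mem_singleton.mp (support_monomial_subset hwu)⟩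

lemma single_zero_add_cons (k c : ℕ) (u : Mon n) :
    Finsupp.single 0 k + cons c u = cons (k + c) u := by
  ext j
  cases j using Fin.cases <;> simp [Fin.succ_ne_zero]

lemma X_zero_pow_mul_homogPoly (p : MvPolynomial (Fin n) K) (k : ℕ) :
    X 0 ^ k * homogPoly K p =
      ∑ u ∈ p.support, monomial (cons (k + (p.totalDegree - mdeg u)) u) (coeff u p) := by
  rw [homogPoly, Finset.mul_sum]
  refine Finset.sum_congr rfl fun u _ => ?_
  rw [X_pow_eq_monomial, monomial_mul, one_mul, emb_add_single_zero, single_zero_add_cons]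

lemma coeff_X_zero_pow_mul_homogPoly (p : MvPolynomial (Fin n) K) (k : ℕ) (u : Mon n) :
    coeff (cons (k + (p.totalDegree - mdeg u)) u) (X 0 ^ k * homogPoly K p) = coeff u p := by
  rw [X_zero_pow_mul_homogPoly]
  exact coeff_sum_monomial_of_injective (e := fun u => cons (k + (p.totalDegree - mdeg u)) u)
    (fun u u' h => by simpa only [Finsupp.tail_cons] using congrArg tail h) p u

lemma exists_eq_cons_of_mem_support_X_zero_pow_mul_homogPoly {p : MvPolynomial (Fin n) K}
    {k : ℕ} {v : Mon (n + 1)} (hv : v ∈ (X 0 ^ k * homogPoly K p).support) :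
    ∃ u ∈ p.support, v = cons (k + (p.totalDegree - mdeg u)) u := by
  rw [X_zero_pow_mul_homogPoly] at hv
  exact exists_eq_of_mem_support_sum_monomial _ p hv

lemma isHomogeneous_X_zero_pow_mul_homogPoly (p : MvPolynomial (Fin n) K) (k : ℕ) :
    (X 0 ^ k * homogPoly K p).IsHomogeneous (k + p.totalDegree) := by
  rw [X_zero_pow_mul_homogPoly]
  refine IsHomogeneous.sum _ _ _ fun u hu => isHomogeneous_monomial _ ?_
  rw [← mdeg_eq_degree, mdeg_cons]
  have : mdeg u ≤ p.totalDegree := le_totalDegree hu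
  omega

end Polynomials

section MarkedSets

open Finsupp (cons)

variable {𝔧 : Set (Mon n)} {m : ℕ} {f h : Mon n → MvPolynomial (Fin n) K} {α : Mon n}

lemma combPoly_marked (hms : JmMarkedSet K 𝔧 m f) (hcomp : IsCompletion K 𝔧 m f h)
    (hα : α ∈ Dset 𝔧 m) :
    coeff α (combPoly K 𝔧 f h α) = 1 ∧
      ∀ u ∈ (combPoly K 𝔧 f h α).support, u ≠ α → u ∉ 𝔧 ∧ mdeg u ≤ max m (mdeg α) := by
  by_cases hb : α ∈ MinBasis 𝔧
  · rw [combPoly, if_pos hb]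
    exact hms α hb
  · obtain ⟨hαJ, hαm, -⟩ := hα.resolve_left hb
    obtain ⟨-, hcoeff, htail⟩ := hcomp α hαJ hαm hb
    rw [combPoly, if_neg hb]
    exact ⟨hcoeff, fun u hu hne => (htail u hu hne).imp_right le_max_of_le_left⟩

lemma mdeg_le_totalDegree_combPoly (hms : JmMarkedSet K 𝔧 m f) (hcomp : IsCompletion K 𝔧 m f h)
    (hα : α ∈ Dset 𝔧 m) : mdeg α ≤ (combPoly K 𝔧 f h α).totalDegree :=
  le_totalDegree (mem_support_iff.mpr (by simp [(combPoly_marked K hms hcomp hα).1]))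

lemma totalDegree_combPoly_le (hms : JmMarkedSet K 𝔧 m f) (hcomp : IsCompletion K 𝔧 m f h)
    (hα : α ∈ Dset 𝔧 m) : (combPoly K 𝔧 f h α).totalDegree ≤ max m (mdeg α) := by
  refine Finset.sup_le fun u hu => ?_
  rcases eq_or_ne u α with rfl | hne
  exacts [le_max_right _ _, ((combPoly_marked K hms hcomp hα).2 u hu hne).2]

lemma homHead_eq_cons (hms : JmMarkedSet K 𝔧 m f) (hcomp : IsCompletion K 𝔧 m f h)
    (hα : α ∈ Dset 𝔧 m) : homHead K 𝔧 f h m α =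
      cons (mShift K 𝔧 f h m α + ((combPoly K 𝔧 f h α).totalDegree - mdeg α)) α := by
  have := mdeg_le_totalDegree_combPoly K hms hcomp hα
  rw [homHead, emb_add_single_zero, Nat.add_sub_assoc this]

lemma homHead_eq_padMon (hms : JmMarkedSet K 𝔧 m f) (hcomp : IsCompletion K 𝔧 m f h)
    (hα : α ∈ Dset 𝔧 m) : homHead K 𝔧 f h m α = padMon m α := by
  have hlow := mdeg_le_totalDegree_combPoly K hms hcomp hα
  have hup := totalDegree_combPoly_le K hms hcomp hα
  rw [homHead_eq_cons K hms hcomp hα, padMon, mShift]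
  congr 1
  omega

end MarkedSets

theorem homogenized_markedSet_general {n : ℕ} (K : Type) [Field K]
    (𝔧 : Set (Mon n)) (m : ℕ) (f h : Mon n → MvPolynomial (Fin n) K)
    (hss : StronglyStable 𝔧)
    (hms : JmMarkedSet K 𝔧 m f) (hcomp : IsCompletion K 𝔧 m f h) :
    Set.InjOn (homHead K 𝔧 f h m) (Dset 𝔧 m) ∧
    homHead K 𝔧 f h m '' Dset 𝔧 m = MinBasis (trunc (genBy (emb '' MinBasis 𝔧)) m) ∧
    ∀ α ∈ Dset 𝔧 m,
      MvPolynomial.coeff (homHead K 𝔧 f h m α) (homG K 𝔧 f h m α) = 1 ∧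
      (homG K 𝔧 f h m α).IsHomogeneous (mdeg (homHead K 𝔧 f h m α)) ∧
      ∀ v ∈ (homG K 𝔧 f h m α).support, v ≠ homHead K 𝔧 f h m α →
        v ∉ trunc (genBy (emb '' MinBasis 𝔧)) m := by
  have hhead : Set.EqOn (homHead K 𝔧 f h m) (padMon m) (Dset 𝔧 m) :=
    fun α hα => homHead_eq_padMon K hms hcomp hα
  refine ⟨(padMon_injective m).injOn.congr hhead.symm,
    (Set.image_congr hhead).trans (image_padMon_Dset hss.1 m), fun α hα => ?_⟩
  obtain ⟨hcoeff, htail⟩ := combPoly_marked K hms hcomp hα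
  rw [homHead_eq_cons K hms hcomp hα, homG, mdeg_cons,
    Nat.add_assoc, Nat.sub_add_cancel (mdeg_le_totalDegree_combPoly K hms hcomp hα)]
  refine ⟨(coeff_X_zero_pow_mul_homogPoly K _ _ α).trans hcoeff,
    isHomogeneous_X_zero_pow_mul_homogPoly K _ _, fun v hv hne hvJ => ?_⟩
  obtain ⟨u, hu, rfl⟩ := exists_eq_cons_of_mem_support_X_zero_pow_mul_homogPoly K hv
  have hvJh := (mem_genBy_emb_minBasis_iff hss.1).mp hvJ.1
  rw [Finsupp.tail_cons] at hvJh
  exact (htail u hu fun hua => hne (hua ▸ rfl)).1 hvJh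

/-- the homogenization `G = {x_0^{m_α} f_α^h : f_α ∈ 𝔊 ∪ 𝔊̄}` of
a `[𝔧,m]`-marked set `𝔊` with completion `𝔊̄` is a `(𝔧^h)_{≥m}`-marked set in
`S`, with head terms `x_0^{m_α + deg f_α - |α|} x^α`. -/
theorem homogenized_markedSet {n : ℕ} (K : Type) [Field K]
    (𝔧 : Set (Mon n)) (m : ℕ) (f h : Mon n → MvPolynomial (Fin n) K)
    (hss : StronglyStable 𝔧) (hm : 0 < m)
    (hms : JmMarkedSet K 𝔧 m f) (hcomp : IsCompletion K 𝔧 m f h) :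
    Set.InjOn (homHead K 𝔧 f h m) (Dset 𝔧 m) ∧
    homHead K 𝔧 f h m '' Dset 𝔧 m = MinBasis (trunc (genBy (emb '' MinBasis 𝔧)) m) ∧
    ∀ α ∈ Dset 𝔧 m,
      MvPolynomial.coeff (homHead K 𝔧 f h m α) (homG K 𝔧 f h m α) = 1 ∧
      (homG K 𝔧 f h m α).IsHomogeneous (mdeg (homHead K 𝔧 f h m α)) ∧
      ∀ v ∈ (homG K 𝔧 f h m α).support, v ≠ homHead K 𝔧 f h m α →
        v ∉ trunc (genBy (emb '' MinBasis 𝔧)) m :=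
  homogenized_markedSet_general K 𝔧 m f h hss hms hcomp

end Paper
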